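/- If a k-superior edge set E_k is deleted from a graph G, then for every vertex v with core_G(v) = k, the core number of v decreases by at most 1, and for every vertex v with core_G(v) ≠ k, the core number of v does not change. -/

import Mathlib

open SimpleGraph

/-- The core number of a vertex: the largest `k` such that the vertex lies in a
subgraph of `G` with minimum degree at least `k`. -/
noncomputable def coreNumber {V : Type*} (G : SimpleGraph V) (v : V) : ℕ :=
  sSup {k : ℕ | ∃ H : G.Subgraph, v ∈ H.verts ∧ ∀ w ∈ H.verts, k ≤ (H.neighborSet w).ncard}

/-- `S` is a `k`-superior edge set of existing edges of `G`. -/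
def IsKSuperiorDeleteSet {V : Type*} (G : SimpleGraph V) (k : ℕ) (S : Set (Sym2 V)) : Prop :=
  (∀ e ∈ S, e ∈ G.edgeSet ∧ ∃ u v : V, e = s(u,v) ∧
      coreNumber G u = k ∧ coreNumber G u ≤ coreNumber G v) ∧
  ∀ e₁ ∈ S, ∀ e₂ ∈ S, e₁ ≠ e₂ → ∀ u : V, u ∈ e₁ → u ∈ e₂ → k < coreNumber G u

/-!
Let `f = superiorDeleteBound G k`, i.e. `f w = k - 1` if `core_G(w) = k` and `f w = core_G(w)`
otherwise; `f` is monotone in the core number. A vertex `w` lies in a subgraph `H` of minimum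
degree `core_G(w)` whose vertices all have core number at least `core_G(w)`, so its
`H`-neighbours `x` satisfy `f w ≤ f x`. An edge of `S` joins a vertex of core number `k` to one
of core number at least `k`, and two edges of `S` meet only at vertices of core number above `k`;
hence `S` contains at most one of these edges when `core_G(w) = k`, and none otherwise. So in
`G - S` every `w` keeps at least `f w` neighbours `x` with `f w ≤ f x`, and the subgraph induced
on `{w | f v ≤ f w}` gives `f v ≤ core_{G-S}(v)`.
-/

section CoreNumber

variable {V : Type*} [Finite V] {G G' : SimpleGraph V}

lemma bddAbove_setOf_le_minDegree_subgraph (G : SimpleGraph V) (v : V) :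
    BddAbove {k : ℕ | ∃ H : G.Subgraph, v ∈ H.verts ∧
      ∀ w ∈ H.verts, k ≤ (H.neighborSet w).ncard} := by
  refine ⟨Nat.card V, ?_⟩
  rintro m ⟨H, hv, hd⟩
  calc m ≤ (H.neighborSet v).ncard := hd v hv
    _ ≤ (Set.univ : Set V).ncard := Set.ncard_le_ncard (Set.subset_univ _)
    _ = Nat.card V := Set.ncard_univ V

lemma le_coreNumber {v : V} {c : ℕ} (H : G.Subgraph) (hv : v ∈ H.verts)
    (hd : ∀ w ∈ H.verts, c ≤ (H.neighborSet w).ncard) : c ≤ coreNumber G v :=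
  le_csSup (bddAbove_setOf_le_minDegree_subgraph G v) ⟨H, hv, hd⟩

lemma exists_subgraph_coreNumber_le_ncard_neighborSet (G : SimpleGraph V) (v : V) :
    ∃ H : G.Subgraph, v ∈ H.verts ∧ ∀ w ∈ H.verts, coreNumber G v ≤ (H.neighborSet w).ncard :=
  Nat.sSup_mem (s := {k : ℕ | ∃ H : G.Subgraph, v ∈ H.verts ∧
      ∀ w ∈ H.verts, k ≤ (H.neighborSet w).ncard})
    ⟨0, G.singletonSubgraph v, Set.mem_singleton v, fun _ _ => Nat.zero_le _⟩
    (bddAbove_setOf_le_minDegree_subgraph G v)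

lemma coreNumber_mono (h : G ≤ G') (v : V) : coreNumber G v ≤ coreNumber G' v := by
  obtain ⟨H, hv, hd⟩ := exists_subgraph_coreNumber_le_ncard_neighborSet G v
  exact le_coreNumber ⟨H.verts, H.Adj, fun hab => h (H.adj_sub hab), H.edge_vert, H.symm⟩ hv hd

lemma le_coreNumber_of_le_ncard_adj (f : V → ℕ)
    (hf : ∀ w, f w ≤ {x | G.Adj w x ∧ f w ≤ f x}.ncard) (v : V) : f v ≤ coreNumber G v := by
  refine le_coreNumber ((⊤ : G.Subgraph).induce {w | f v ≤ f w}) (le_refl (f v)) fun w hw => ?_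
  refine (le_trans hw (hf w)).trans (Set.ncard_le_ncard fun x ⟨hwx, hfx⟩ => ?_)
  exact ⟨hw, le_trans hw hfx, hwx⟩

end CoreNumber

noncomputable def superiorDeleteBound {V : Type*} (G : SimpleGraph V) (k : ℕ) (w : V) : ℕ :=
  if coreNumber G w = k then k - 1 else coreNumber G w

lemma superiorDeleteBound_mono {V : Type*} {G : SimpleGraph V} {k : ℕ} {w x : V}
    (h : coreNumber G w ≤ coreNumber G x) :
    superiorDeleteBound G k w ≤ superiorDeleteBound G k x := by
  unfold superiorDeleteBound
  split_ifs <;> omega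

namespace IsKSuperiorDeleteSet

variable {V : Type*} {G : SimpleGraph V} {k : ℕ} {S : Set (Sym2 V)}

lemma coreNumber_eq_of_mem (hS : IsKSuperiorDeleteSet G k S) {w x : V} (he : s(w, x) ∈ S)
    (hwx : coreNumber G w ≤ coreNumber G x) : coreNumber G w = k := by
  obtain ⟨-, u, y, hey, hu, huy⟩ := hS.1 _ he
  rcases Sym2.eq_iff.mp hey with ⟨rfl, -⟩ | ⟨rfl, rfl⟩
  · exact hu
  · omega

lemma subsingleton_setOf_mem (hS : IsKSuperiorDeleteSet G k S) {w : V}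
    (hw : coreNumber G w ≤ k) : {x | s(w, x) ∈ S}.Subsingleton := by
  intro x₁ hx₁ x₂ hx₂
  by_contra hne
  have := hS.2 _ hx₁ _ hx₂ (Sym2.congr_right.not.mpr hne) w
    (Sym2.mem_mk_left _ _) (Sym2.mem_mk_left _ _)
  omega

lemma superiorDeleteBound_le_ncard_adj [Finite V] (hS : IsKSuperiorDeleteSet G k S) (w : V) :
    superiorDeleteBound G k w ≤ {x | (G.deleteEdges S).Adj w x ∧
      superiorDeleteBound G k w ≤ superiorDeleteBound G k x}.ncard := by
  obtain ⟨H, hwH, hdeg⟩ := exists_subgraph_coreNumber_le_ncard_neighborSet G w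
  set N := H.neighborSet w
  set D := {x | s(w, x) ∈ S}
  have hcore : ∀ x ∈ N, coreNumber G w ≤ coreNumber G x :=
    fun x hx => le_coreNumber H (H.edge_vert hx.symm) hdeg
  have hkept : N \ D ⊆ {x | (G.deleteEdges S).Adj w x ∧
      superiorDeleteBound G k w ≤ superiorDeleteBound G k x} :=
    fun x ⟨hxN, hxD⟩ => ⟨(G.deleteEdges_adj ..).2 ⟨H.adj_sub hxN, hxD⟩,
      superiorDeleteBound_mono (hcore x hxN)⟩
  refine le_trans ?_ (Set.ncard_le_ncard hkept)
  have hsplit := Set.ncard_inter_add_ncard_sdiff_eq_ncard N D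
  have hdeg_w : coreNumber G w ≤ N.ncard := hdeg w hwH
  rw [superiorDeleteBound]
  split_ifs with hk
  · have : (N ∩ D).ncard ≤ 1 := (Set.ncard_le_one_iff).mpr fun hx hy =>
      hS.subsingleton_setOf_mem hk.le hx.2 hy.2
    omega
  · have : N ∩ D = ∅ := Set.eq_empty_of_forall_notMem fun x ⟨hxN, hxD⟩ =>
      hk (hS.coreNumber_eq_of_mem hxD (hcore x hxN))
    rw [this, Set.ncard_empty] at hsplit
    omega

end IsKSuperiorDeleteSet

theorem kSuperiorDelete_core_change {V : Type*} [Fintype V] (G : SimpleGraph V)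
    (k : ℕ) (S : Set (Sym2 V)) (hS : IsKSuperiorDeleteSet G k S) (v : V) :
    (coreNumber G v = k → coreNumber G v ≤ coreNumber (G.deleteEdges S) v + 1) ∧
    (coreNumber G v ≠ k → coreNumber (G.deleteEdges S) v = coreNumber G v) := by
  have hlower := le_coreNumber_of_le_ncard_adj _ hS.superiorDeleteBound_le_ncard_adj v
  have hupper := coreNumber_mono (G.deleteEdges_le S) v
  unfold superiorDeleteBound at hlower
  constructor <;> intro h <;> simp only [h, if_true, if_false] at hlower <;> omega
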